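/- arXiv:1801.09863 — 7 statements merged into one kernel-verified Lean document; each statement's English description precedes it below -/
import Mathlib

section
/- Let m, n, q be positive integers, let R be a subset of F_m, and let G be the group presented as F_m modulo the normal closure of R ∪ W_n (i.e., G = ⟨x_1, …, x_m | R, W_n⟩). If the quotient G/γ_q G is isomorphic to F^q(m,n), then R is contained in the subgroup W̄_n · γ_q F_m of F_m. -/
/-- `W_n`, the set of `n`-th powers in a group `G`. -/
def powSet (G : Type*) [Group G] (n : ℕ) : Set G := {x | ∃ w : G, x = w ^ n}

/-- `W̄_n`, the normal subgroup of the free group `F_m` generated by the set `W_n`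
of `n`-th powers. -/
def Wbar (m n : ℕ) : Subgroup (FreeGroup (Fin m)) :=
  Subgroup.normalClosure (powSet (FreeGroup (Fin m)) n)

instance (m n : ℕ) : (Wbar m n).Normal := Subgroup.normalClosure_normal

/-- `W̄_n · γ_q F_m`: since both factors are normal subgroups of `F_m`, this product
subgroup equals the join.  (Recall `lowerCentralSeries G 0 = G = γ₁ G`, so
`γ_q G = lowerCentralSeries G (q-1)`.) -/
def WbarGamma (m n q : ℕ) : Subgroup (FreeGroup (Fin m)) :=
  Wbar m n ⊔ (⊤ : Subgroup (FreeGroup (Fin m))).lowerCentralSeries (q - 1)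

instance (m n q : ℕ) : (WbarGamma m n q).Normal := Subgroup.sup_normal _ _

/-- `F^q(m,n) = F_m / (W̄_n · γ_q F_m)`. -/
def BurnsideQuot (m n q : ℕ) : Type := FreeGroup (Fin m) ⧸ WbarGamma m n q

noncomputable instance (m n q : ℕ) : Group (BurnsideQuot m n q) :=
  QuotientGroup.Quotient.group _

/-!
Let `N` be the normal closure of `R ∪ W_n`, so `G/γ_q G ≅ F_m/(N · γ_q F_m)`. A finitely generated
nilpotent torsion group is finite (induct on the nilpotency class: if `H/Z(H)` is finite, Schur's
theorem makes `[H, H]` finite, and `H/[H, H]` is a finitely generated abelian torsion group), so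
`F^q(m,n)` is finite. Hence `W̄_n · γ_q F_m ≤ N · γ_q F_m` are subgroups of the same finite index,
so they are equal, and the latter contains `R`.
-/

open Subgroup
open scoped commutatorElement

section

variable {G : Type*} [Group G]

lemma commutatorElement_mul_left_of_mem_center {z : G} (hz : z ∈ center G) (a b : G) :
    ⁅a * z, b⁆ = ⁅a, b⁆ := by
  rw [commutatorElement_def, commutatorElement_def, mul_assoc a z b, ← mem_center_iff.mp hz b]
  group

lemma commutatorElement_mul_right_of_mem_center {z : G} (hz : z ∈ center G) (a b : G) :
    ⁅a, b * z⁆ = ⁅a, b⁆ := by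
  rw [← commutatorElement_inv, commutatorElement_mul_left_of_mem_center hz, commutatorElement_inv]

lemma finite_commutatorSet_of_finite_quotient_center [Finite (G ⧸ center G)] :
    Finite (commutatorSet G) := by
  suffices commutatorSet G ⊆
      Set.range fun p : (G ⧸ center G) × (G ⧸ center G) ↦ ⁅p.1.out, p.2.out⁆ from
    ((Set.finite_range _).subset this).to_subtype
  rintro _ ⟨g, h, rfl⟩
  obtain ⟨⟨z, hz⟩, hgz⟩ := QuotientGroup.mk_out_eq_mul (center G) g
  obtain ⟨⟨w, hw⟩, hhw⟩ := QuotientGroup.mk_out_eq_mul (center G) h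
  exact ⟨(g, h), by simp only [hgz, hhw, commutatorElement_mul_left_of_mem_center hz,
    commutatorElement_mul_right_of_mem_center hw]⟩

theorem Group.IsNilpotent.finite_of_fg_of_isMulTorsion (G : Type*) [Group G] [IsNilpotent G]
    [FG G] (hG : IsMulTorsion G) : Finite G := by
  suffices ∀ (G : Type _) [Group G] [IsNilpotent G], FG G → IsMulTorsion G → Finite G from
    this G ‹_› hG
  refine fun G _ _ ↦ nilpotent_center_quotient_ind
    (P := fun G _ _ ↦ FG G → IsMulTorsion G → Finite G) G (fun _ _ _ _ _ ↦ inferInstance) ?_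
  intro G _ _ ih _ hG
  have : Finite (G ⧸ center G) := ih (fg_of_surjective (QuotientGroup.mk'_surjective _))
    (hG.of_surjective (QuotientGroup.mk'_surjective _))
  have : Finite (commutatorSet G) := finite_commutatorSet_of_finite_quotient_center
  have : FG (Abelianization G) := fg_of_surjective (QuotientGroup.mk'_surjective (commutator G))
  have : Finite (G ⧸ commutator G) := CommGroup.finite_of_fg_isMulTorsion (Abelianization G)
    (hG.of_surjective (QuotientGroup.mk'_surjective (commutator G)))
  exact Finite.of_subgroup_quotient (commutator G)

lemma isNilpotent_quotient_of_lowerCentralSeries_le {H : Subgroup G} [H.Normal] {k : ℕ}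
    (hk : (⊤ : Subgroup G).lowerCentralSeries k ≤ H) : Group.IsNilpotent (G ⧸ H) := by
  refine Subgroup.nilpotent_iff_lowerCentralSeries.mpr ⟨k, ?_⟩
  rw [← map_top_of_surjective _ (QuotientGroup.mk'_surjective H), ← map_lowerCentralSeries,
    Subgroup.map_eq_bot_iff, QuotientGroup.ker_mk']
  exact hk

lemma isMulTorsion_quotient_of_pow_mem {H : Subgroup G} [H.Normal] {n : ℕ} (hn : 0 < n)
    (h : ∀ g : G, g ^ n ∈ H) : IsMulTorsion (G ⧸ H) := by
  rintro ⟨g⟩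
  exact isOfFinOrder_iff_pow_eq_one.mpr ⟨n, hn, (QuotientGroup.eq_one_iff _).mpr (h g)⟩

lemma index_sup_lowerCentralSeries (N : Subgroup G) [N.Normal] (k : ℕ) :
    (N ⊔ (⊤ : Subgroup G).lowerCentralSeries k).index =
      ((⊤ : Subgroup (G ⧸ N)).lowerCentralSeries k).index := by
  rw [← index_map_eq (H := N ⊔ _) (QuotientGroup.mk'_surjective N) (by simp), Subgroup.map_sup,
    QuotientGroup.map_mk'_self, bot_sup_eq, map_lowerCentralSeries,
    map_top_of_surjective _ (QuotientGroup.mk'_surjective N)]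

lemma le_of_le_of_index_eq {H K : Subgroup G} [H.FiniteIndex] (hHK : H ≤ K)
    (h : K.index = H.index) : K ≤ H :=
  (eq_of_le_of_not_lt hHK fun hlt ↦ (index_strictAnti hlt).ne h).ge

end

theorem finite_burnsideQuot {m n q : ℕ} (hn : 0 < n) :
    Finite (BurnsideQuot m n q) := by
  have : Group.FG (FreeGroup (Fin m) ⧸ WbarGamma m n q) :=
    Group.fg_of_surjective (QuotientGroup.mk'_surjective _)
  have : Group.IsNilpotent (FreeGroup (Fin m) ⧸ WbarGamma m n q) :=
    isNilpotent_quotient_of_lowerCentralSeries_le le_sup_right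
  exact Group.IsNilpotent.finite_of_fg_of_isMulTorsion (FreeGroup (Fin m) ⧸ WbarGamma m n q) <|
    isMulTorsion_quotient_of_pow_mem hn
      fun g ↦ le_sup_left (a := Wbar m n) (subset_normalClosure ⟨g, rfl⟩)

theorem burnside_presentation_relators_mem_general
    (m n q : ℕ) (hn : 0 < n)
    (R : Set (FreeGroup (Fin m)))
    (h : Nonempty (
      ((FreeGroup (Fin m) ⧸
          Subgroup.normalClosure (R ∪ powSet (FreeGroup (Fin m)) n)) ⧸
        Subgroup.lowerCentralSeries
          (⊤ : Subgroup (FreeGroup (Fin m) ⧸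
            Subgroup.normalClosure (R ∪ powSet (FreeGroup (Fin m)) n))) (q - 1))
      ≃* BurnsideQuot m n q)) :
    R ⊆ ↑(WbarGamma m n q) := by
  obtain ⟨e⟩ := h
  set N := normalClosure (R ∪ powSet (FreeGroup (Fin m)) n)
  set γ := (⊤ : Subgroup (FreeGroup (Fin m))).lowerCentralSeries (q - 1)
  have : (WbarGamma m n q).FiniteIndex :=
    @finiteIndex_of_finite_quotient _ _ _ (finite_burnsideQuot hn)
  have hle : WbarGamma m n q ≤ N ⊔ γ :=
    sup_le_sup_right (normalClosure_mono Set.subset_union_right) _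
  have hindex : (N ⊔ γ).index = (WbarGamma m n q).index := by
    rw [index_sup_lowerCentralSeries]
    exact Nat.card_congr e.toEquiv
  intro r hr
  exact le_of_le_of_index_eq hle hindex (le_sup_left (b := γ) (subset_normalClosure (Or.inl hr)))

/-- Let `m, n, q` be positive integers, `R ⊆ F_m`, and let
`G = ⟨x_1, …, x_m | R, W_n⟩` be the quotient of the free group `F_m` by the normal
closure of `R ∪ W_n`.  If `G/γ_q G ≅ F^q(m,n)`, then `R ⊆ W̄_n · γ_q F_m`. -/
theorem burnside_presentation_relators_mem
    (m n q : ℕ) (hm : 0 < m) (hn : 0 < n) (hq : 0 < q)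
    (R : Set (FreeGroup (Fin m)))
    (h : Nonempty (
      ((FreeGroup (Fin m) ⧸
          Subgroup.normalClosure (R ∪ powSet (FreeGroup (Fin m)) n)) ⧸
        Subgroup.lowerCentralSeries
          (⊤ : Subgroup (FreeGroup (Fin m) ⧸
            Subgroup.normalClosure (R ∪ powSet (FreeGroup (Fin m)) n))) (q - 1))
      ≃* BurnsideQuot m n q)) :
    R ⊆ ↑(WbarGamma m n q) :=
  burnside_presentation_relators_mem_general m n q hn R h
end

section
/- For all positive integers m, n, q, the group F^q(m,n) = F_m/(W̄_n · γ_q F_m) is finite. -/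
/-!
By induction on the nilpotency class, a finitely generated nilpotent torsion group `G` is finite:
`G ⧸ center G` is again finitely generated, nilpotent and torsion, of smaller class, hence finite;
so the center has finite index, is finitely generated by Schreier's lemma, and is therefore a
finitely generated abelian torsion group, hence finite.  The group `F^q(m,n)` is generated by the
images of the `m` free generators, has exponent dividing `n`, and is nilpotent because `γ_q` dies
in it.
-/

open Subgroup

theorem QuotientGroup.isNilpotent_of_lowerCentralSeries_le {G : Type*} [Group G]
    (N : Subgroup G) [N.Normal] {k : ℕ} (h : (⊤ : Subgroup G).lowerCentralSeries k ≤ N) :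
    Group.IsNilpotent (G ⧸ N) := by
  refine Subgroup.nilpotent_iff_lowerCentralSeries.2 ⟨k, ?_⟩
  rwa [← map_top_of_surjective _ (QuotientGroup.mk'_surjective N), ← map_lowerCentralSeries,
    Subgroup.map_eq_bot_iff, QuotientGroup.ker_mk']

open scoped IsMulCommutative in
theorem Group.IsNilpotent.finite_of_fg_isMulTorsion (G : Type*) [Group G] [Group.IsNilpotent G]
    [Group.FG G] (hG : IsMulTorsion G) : Finite G := by
  revert hG
  refine nilpotent_center_quotient_ind (P := fun G _ _ ↦ ∀ [Group.FG G], IsMulTorsion G → Finite G)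
    G (fun _ _ _ _ _ ↦ Finite.of_subsingleton) (fun G _ _ ih _ hG ↦ ?_)
  have : Finite (G ⧸ center G) := ih (hG.of_surjective (QuotientGroup.mk'_surjective _))
  have : (center G).FiniteIndex := finiteIndex_of_finite_quotient
  have : Finite (center G) := CommGroup.finite_of_fg_isMulTorsion _ (hG.subgroup _)
  exact Finite.of_subgroup_quotient (center G)

theorem burnsideQuot_finite_general (m n q : ℕ) (hn : 0 < n) :
    Finite (BurnsideQuot m n q) := by
  have hpow : ∀ g : BurnsideQuot m n q, g ^ n = 1 := by
    rintro ⟨w⟩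
    exact (QuotientGroup.eq_one_iff _).2 (mem_sup_left (subset_normalClosure ⟨w, rfl⟩))
  have : Group.IsNilpotent (BurnsideQuot m n q) :=
    QuotientGroup.isNilpotent_of_lowerCentralSeries_le _ le_sup_right
  have : Group.FG (BurnsideQuot m n q) := QuotientGroup.fg _
  exact Group.IsNilpotent.finite_of_fg_isMulTorsion _ (ExponentExists.isMulTorsion ⟨n, hn, hpow⟩)

/-- For all positive integers `m, n, q`, the group
`F^q(m,n) = F_m/(W̄_n · γ_q F_m)` is finite. -/
theorem burnsideQuot_finite (m n q : ℕ) (hm : 0 < m) (hn : 0 < n) (hq : 0 < q) :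
    Finite (BurnsideQuot m n q) :=
  burnsideQuot_finite_general m n q hn
end

section
/- Let p be a prime and m a positive integer, and work in the truncated algebra A_{p+1} over ℤ/pℤ. For every u ∈ F_m, write the degree-1 component of E^p(u) as ℓ = Σ_{i=1}^m a_i X_i with a_i ∈ ℤ/pℤ. Then E^p(u^p) = 1 + ℓ^p in A_{p+1}; that is, E^p(u^p) = 1 + Σ_{(i_1, …, i_p)∈{1,…,m}^p} a_{i_1}⋯a_{i_p} X_{i_1}⋯X_{i_p}. -/
/-! Lift `E^p(u)` to `t = 1 + n` in the free algebra. The augmentation kills every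
`E^p(x_i) - 1`, so `n` has no constant term, and `n ≡ ℓ` modulo words of length `≥ 2`.
In characteristic `p`, `(1 + n)^p = 1 + n^p`, and `n^p - ℓ^p = Σ_j n^j (n - ℓ) ℓ^(p-1-j)`
only involves words of length `≥ p + 1`, which vanish in `A_{p+1}`. -/

/-- The monomial `X_{w₁} ⋯ X_{w_l}` in the free associative `ZMod p`-algebra `T` on
noncommuting indeterminates `X_1, …, X_m`. -/
def magnusMonomial (p m : ℕ) (w : List (Fin m)) : FreeAlgebra (ZMod p) (Fin m) :=
  (w.map (FreeAlgebra.ι (ZMod p))).prod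

/-- The relation generating (as a ring congruence) the two-sided ideal `I^k`, where
`I ⊆ T` is the two-sided ideal generated by `X_1, …, X_m`: every monomial of degree `k`
is set to `0`. -/
def truncRel (p m k : ℕ) :
    FreeAlgebra (ZMod p) (Fin m) → FreeAlgebra (ZMod p) (Fin m) → Prop :=
  fun a b => ∃ w : List (Fin m), w.length = k ∧ a = magnusMonomial p m w ∧ b = 0

/-- The truncated algebra `A_k = T/I^k`. -/
abbrev TruncAlgebra (p m k : ℕ) := RingQuot (truncRel p m k)

/-- The quotient map `T → A_k`. -/
def truncMk (p m k : ℕ) :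
    FreeAlgebra (ZMod p) (Fin m) →+* TruncAlgebra p m k :=
  RingQuot.mkRingHom _

lemma isUnit_one_add_X (p m k : ℕ) (i : Fin m) :
    IsUnit (1 + truncMk p m k (FreeAlgebra.ι (ZMod p) i)) := by
  refine IsNilpotent.isUnit_one_add ⟨k, ?_⟩
  rw [← map_pow]
  have h1 : (FreeAlgebra.ι (ZMod p) i) ^ k = magnusMonomial p m (List.replicate k i) := by
    simp [magnusMonomial, List.map_replicate, List.prod_replicate]
  have h2 : truncMk p m k (magnusMonomial p m (List.replicate k i)) = truncMk p m k 0 :=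
    RingQuot.mkRingHom_rel ⟨List.replicate k i, List.length_replicate, rfl, rfl⟩
  rw [h1, h2, map_zero]

/-- The Magnus `ZMod p`-expansion truncated at degree `k`: the unique group homomorphism
`E^p : F_m → A_kˣ` with `E^p(x_i) = 1 + X_i`. -/
noncomputable def magnus (p m k : ℕ) :
    FreeGroup (Fin m) →* (TruncAlgebra p m k)ˣ :=
  FreeGroup.lift fun i => (isUnit_one_add_X p m k i).unit

/-- The coefficient of the monomial `X_{w₁} ⋯ X_{w_l}` in an element of the free
algebra `T`, via the canonical basis of `T` given by words in `X_1, …, X_m`. -/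
noncomputable def magnusCoeff (p m : ℕ) (w : List (Fin m))
    (t : FreeAlgebra (ZMod p) (Fin m)) : ZMod p :=
  (FreeAlgebra.equivMonoidAlgebraFreeMonoid (R := ZMod p) (X := Fin m) t).coeff
    (FreeMonoid.ofList w)

namespace FreeAlgebra

variable (R : Type*) [CommSemiring R] (X : Type*)

def wordFiltration (d : ℕ) : Submodule R (FreeAlgebra R X) :=
  Submodule.span R ((fun w : List X => (w.map (ι R)).prod) '' {w | d ≤ w.length})

variable {R X}

lemma prod_map_ι_mem_wordFiltration {d : ℕ} {w : List X} (h : d ≤ w.length) :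
    (w.map (ι R)).prod ∈ wordFiltration R X d :=
  Submodule.subset_span ⟨w, h, rfl⟩

lemma ι_mem_wordFiltration_one (x : X) : ι R x ∈ wordFiltration R X 1 := by
  simpa using prod_map_ι_mem_wordFiltration (R := R) (w := [x]) le_rfl

lemma wordFiltration_antitone : Antitone (wordFiltration R X) := fun _ _ h =>
  Submodule.span_mono <| Set.image_mono fun _ hw => le_trans h hw

lemma wordFiltration_mul_le (d e : ℕ) :
    wordFiltration R X d * wordFiltration R X e ≤ wordFiltration R X (d + e) := by
  rw [wordFiltration, wordFiltration, Submodule.span_mul_span]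
  refine Submodule.span_mono ?_
  rintro _ ⟨_, ⟨w, hw, rfl⟩, _, ⟨v, hv, rfl⟩, rfl⟩
  exact ⟨w ++ v, by simp only [Set.mem_ofPred_eq, List.length_append] at *; omega, by simp⟩

lemma wordFiltration_zero : wordFiltration R X 0 = ⊤ := by
  refine Submodule.eq_top_iff'.2 fun x => ?_
  induction x using FreeAlgebra.induction with
  | grade0 r =>
    simpa [Algebra.smul_def] using
      (wordFiltration R X 0).smul_mem r (prod_map_ι_mem_wordFiltration (w := []) le_rfl)
  | grade1 x => exact wordFiltration_antitone (Nat.zero_le 1) (ι_mem_wordFiltration_one x)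
  | mul x y hx hy => exact wordFiltration_mul_le 0 0 (Submodule.mul_mem_mul hx hy)
  | add x y hx hy => exact add_mem hx hy

lemma wordFiltration_one_pow_le (k : ℕ) :
    wordFiltration R X 1 ^ k ≤ wordFiltration R X k := by
  induction k with
  | zero => simp [wordFiltration_zero]
  | succ k ih =>
    rw [pow_succ]
    exact (mul_le_mul_left ih _).trans (wordFiltration_mul_le k 1)

lemma algebraMapInv_prod_map_ι {w : List X} (hw : w ≠ []) :
    algebraMapInv (w.map (ι R)).prod = 0 := by
  obtain ⟨x, w, rfl⟩ := List.exists_cons_of_ne_nil hw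
  simp [algebraMapInv]

lemma equivMonoidAlgebraFreeMonoid_prod_map_ι (w : List X) :
    equivMonoidAlgebraFreeMonoid (w.map (ι R)).prod =
      MonoidAlgebra.single (FreeMonoid.ofList w) 1 := by
  induction w with
  | nil => simp [MonoidAlgebra.one_def]
  | cons x w ih =>
    rw [List.map_cons, List.prod_cons, map_mul, ih]
    simp [equivMonoidAlgebraFreeMonoid, MonoidAlgebra.single_mul_single]

end FreeAlgebra

namespace Submodule

variable {R A : Type*} [CommSemiring R] [Ring A] [Algebra R A]

lemma pow_sub_pow_mem_pow_succ (I : Submodule R A) {x y : A} (hx : x ∈ I) (hy : y ∈ I)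
    (hxy : x - y ∈ I ^ 2) (n : ℕ) : x ^ n - y ^ n ∈ I ^ (n + 1) := by
  induction n with
  | zero => simp
  | succ n ih =>
    have hsplit : x ^ (n + 1) - y ^ (n + 1) = x * (x ^ n - y ^ n) + (x - y) * y ^ n := by
      rw [pow_succ' x, pow_succ' y]
      noncomm_ring
    rw [hsplit]
    refine add_mem ?_ ?_
    · simpa only [← pow_succ'] using mul_mem_mul hx ih
    · simpa only [← pow_add, add_comm 2 n] using mul_mem_mul hxy (pow_mem_pow I hy n)

end Submodule

lemma sum_smul_pow_eq_sum_ofFn {R A ι : Type*} [CommSemiring R] [Semiring A] [Algebra R A]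
    [Fintype ι] (a : ι → R) (v : ι → A) (n : ℕ) :
    (∑ i, a i • v i) ^ n = ∑ f : Fin n → ι, (∏ j, a (f j)) • (List.ofFn (v ∘ f)).prod := by
  induction n with
  | zero => simp
  | succ n ih =>
    rw [pow_succ', ih, ← (Fin.consEquiv fun _ => ι).sum_comp, Fintype.sum_prod_type,
      Finset.sum_mul_sum]
    refine Finset.sum_congr rfl fun i _ => Finset.sum_congr rfl fun f _ => ?_
    simp only [Fin.consEquiv, Equiv.coe_fn_mk, Fin.prod_univ_succ, Fin.cons_zero, Fin.cons_succ,
      List.ofFn_succ, Function.comp_apply, List.prod_cons, mul_smul, smul_mul_smul_comm]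
    rfl

section Magnus

open FreeAlgebra

variable {p m k : ℕ}

lemma truncMk_apply (x : FreeAlgebra (ZMod p) (Fin m)) :
    truncMk p m k x = RingQuot.mkAlgHom (ZMod p) (truncRel p m k) x := by
  rw [truncMk, ← RingQuot.mkAlgHom_coe (ZMod p)]
  rfl

lemma truncMk_smul (c : ZMod p) (x : FreeAlgebra (ZMod p) (Fin m)) :
    truncMk p m k (c • x) = c • truncMk p m k x := by
  simp only [truncMk_apply, map_smul]

lemma truncMk_eq_zero_of_mem_wordFiltration {x : FreeAlgebra (ZMod p) (Fin m)}
    (hx : x ∈ wordFiltration (ZMod p) (Fin m) k) : truncMk p m k x = 0 := by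
  induction hx using Submodule.span_induction with
  | mem x hx =>
    obtain ⟨w, hw, rfl⟩ := hx
    have hprefix : truncMk p m k (magnusMonomial p m (w.take k)) = truncMk p m k 0 :=
      RingQuot.mkRingHom_rel ⟨w.take k, List.length_take_of_le hw, rfl, rfl⟩
    rw [magnusMonomial, map_zero] at hprefix
    rw [← List.take_append_drop k w]
    simp only [List.map_append, List.prod_append, map_mul, hprefix, zero_mul]
  | zero => exact map_zero _
  | add x y _ _ hx hy => rw [map_add, hx, hy, add_zero]
  | smul c x _ hx => rw [truncMk_smul, hx, smul_zero]

variable (p m) in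
def truncAugmentation (hk : k ≠ 0) : TruncAlgebra p m k →ₐ[ZMod p] ZMod p :=
  RingQuot.liftAlgHom (ZMod p) ⟨algebraMapInv, by
    rintro _ _ ⟨w, hw, rfl, rfl⟩
    rw [map_zero]
    exact algebraMapInv_prod_map_ι (List.ne_nil_of_length_pos (by omega))⟩

lemma truncAugmentation_truncMk (hk : k ≠ 0) (x : FreeAlgebra (ZMod p) (Fin m)) :
    truncAugmentation p m hk (truncMk p m k x) = algebraMapInv x := by
  rw [truncMk_apply]
  exact RingQuot.liftAlgHom_mkAlgHom_apply (ZMod p) algebraMapInv _ x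

lemma truncAugmentation_magnus (hk : k ≠ 0) (u : FreeGroup (Fin m)) :
    truncAugmentation p m hk (magnus p m k u) = 1 := by
  have hcomp : (Units.map (truncAugmentation p m hk : TruncAlgebra p m k →* ZMod p)).comp
      (magnus p m k) = 1 := by
    refine FreeGroup.ext_hom _ _ fun i => Units.ext ?_
    rw [MonoidHom.comp_apply, magnus, FreeGroup.lift_apply_of, Units.coe_map, IsUnit.unit_spec,
      MonoidHom.coe_coe, ← map_one (truncMk p m k), ← map_add, truncAugmentation_truncMk]
    simp [algebraMapInv]
  simpa using congrArg (fun f => (f u : ZMod p)) hcomp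

lemma magnusCoeff_prod_map_ι (w v : List (Fin m)) :
    magnusCoeff p m w (v.map (ι (ZMod p))).prod = if v = w then 1 else 0 := by
  classical
  simp [magnusCoeff, equivMonoidAlgebraFreeMonoid_prod_map_ι, Finsupp.single_apply]

lemma magnusCoeff_add (w : List (Fin m)) (x y : FreeAlgebra (ZMod p) (Fin m)) :
    magnusCoeff p m w (x + y) = magnusCoeff p m w x + magnusCoeff p m w y := by
  simp [magnusCoeff]

lemma magnusCoeff_smul (w : List (Fin m)) (c : ZMod p) (x : FreeAlgebra (ZMod p) (Fin m)) :
    magnusCoeff p m w (c • x) = c * magnusCoeff p m w x := by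
  simp [magnusCoeff]

lemma sub_algebraMapInv_sub_sum_magnusCoeff_mem_sq (x : FreeAlgebra (ZMod p) (Fin m)) :
    x - algebraMap (ZMod p) _ (algebraMapInv x) - ∑ i, magnusCoeff p m [i] x • ι (ZMod p) i ∈
      wordFiltration (ZMod p) (Fin m) 1 ^ 2 := by
  have hx : x ∈ wordFiltration (ZMod p) (Fin m) 0 := by simp [wordFiltration_zero]
  induction hx using Submodule.span_induction with
  | mem x hx =>
    obtain ⟨w, -, rfl⟩ := hx
    simp only [magnusCoeff_prod_map_ι]
    match w with
    | [] => simp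
    | [i] => simp [algebraMapInv]
    | i :: j :: w =>
      simpa [algebraMapInv, pow_two] using Submodule.mul_mem_mul (ι_mem_wordFiltration_one i)
        (prod_map_ι_mem_wordFiltration (w := j :: w) (by simp))
  | zero => simp [magnusCoeff]
  | add x y _ _ hx hy =>
    convert add_mem hx hy using 1
    simp only [map_add, magnusCoeff_add, add_smul, Finset.sum_add_distrib]
    abel
  | smul c x _ hx =>
    convert Submodule.smul_mem _ c hx using 1
    simp only [map_smul, magnusCoeff_smul, mul_smul, smul_sub, Finset.smul_sum,
      Algebra.algebraMap_eq_smul_one, smul_assoc]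

end Magnus

theorem magnus_pow_p_general (p m : ℕ) (hp : p.Prime)
    (u : FreeGroup (Fin m)) (a : Fin m → ZMod p)
    (ha : ∀ t : FreeAlgebra (ZMod p) (Fin m),
      truncMk p m (p + 1) t = ↑(magnus p m (p + 1) u) →
        ∀ i : Fin m, magnusCoeff p m [i] t = a i) :
    (↑(magnus p m (p + 1) (u ^ p)) : TruncAlgebra p m (p + 1)) =
      1 + ∑ f : Fin p → Fin m, (∏ j : Fin p, a (f j)) •
        truncMk p m (p + 1) (magnusMonomial p m (List.ofFn f)) := by
  have : Fact p.Prime := ⟨hp⟩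
  obtain ⟨t, ht⟩ := RingQuot.mkRingHom_surjective (truncRel p m (p + 1)) (magnus p m (p + 1) u)
  set J := FreeAlgebra.wordFiltration (ZMod p) (Fin m) 1
  set ℓ := ∑ i, a i • FreeAlgebra.ι (ZMod p) i
  have hℓ : ℓ ∈ J := sum_mem fun i _ => J.smul_mem _ (FreeAlgebra.ι_mem_wordFiltration_one i)
  have hunit : FreeAlgebra.algebraMapInv t = 1 := by
    rw [← truncAugmentation_truncMk (Nat.succ_ne_zero p), ← truncAugmentation_magnus _ u]
    exact congrArg _ ht
  have hrem : t - 1 - ℓ ∈ J ^ 2 := by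
    simpa [hunit, ha t ht] using sub_algebraMapInv_sub_sum_magnusCoeff_mem_sq t
  have hn : t - 1 ∈ J := by
    simpa using add_mem (FreeAlgebra.wordFiltration_antitone one_le_two
      (FreeAlgebra.wordFiltration_one_pow_le 2 hrem)) hℓ
  have hpow : truncMk p m (p + 1) ((t - 1) ^ p) = truncMk p m (p + 1) (ℓ ^ p) := by
    rw [← sub_eq_zero, ← map_sub]
    exact truncMk_eq_zero_of_mem_wordFiltration
      (FreeAlgebra.wordFiltration_one_pow_le _ (J.pow_sub_pow_mem_pow_succ hn hℓ hrem p))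
  calc (magnus p m (p + 1) (u ^ p) : TruncAlgebra p m (p + 1))
      = truncMk p m (p + 1) (1 + (t - 1)) ^ p := by
        rw [map_pow, Units.val_pow_eq_pow_val, add_sub_cancel, ← ht]
        rfl
    _ = 1 + truncMk p m (p + 1) ((t - 1) ^ p) := by
        rw [← map_pow, add_pow_char_of_commute _ (Commute.one_left _), one_pow, map_add, map_one]
    _ = _ := by
        rw [hpow, sum_smul_pow_eq_sum_ofFn, map_sum]
        simp [truncMk_smul, magnusMonomial, List.map_ofFn]

/-- Let `p` be a prime and `m` a positive integer; work in the truncated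
algebra `A_{p+1}` over `ℤ/pℤ`.  For `u ∈ F_m`, if the degree-1 component of `E^p(u)` is
`Σᵢ aᵢ Xᵢ` (i.e. every representative of `E^p(u)` has coefficient `aᵢ` on `Xᵢ`), then
`E^p(u^p) = 1 + Σ_{(i₁,…,i_p)} a_{i₁}⋯a_{i_p} X_{i₁}⋯X_{i_p}` in `A_{p+1}`. -/
theorem magnus_pow_p (p m : ℕ) (hp : p.Prime) (hm : 0 < m)
    (u : FreeGroup (Fin m)) (a : Fin m → ZMod p)
    (ha : ∀ t : FreeAlgebra (ZMod p) (Fin m),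
      truncMk p m (p + 1) t = ↑(magnus p m (p + 1) u) →
        ∀ i : Fin m, magnusCoeff p m [i] t = a i) :
    (↑(magnus p m (p + 1) (u ^ p)) : TruncAlgebra p m (p + 1)) =
      1 + ∑ f : Fin p → Fin m, (∏ j : Fin p, a (f j)) •
        truncMk p m (p + 1) (magnusMonomial p m (List.ofFn f)) :=
  magnus_pow_p_general p m hp u a ha
end

section
/- For every odd prime p, the element r_1 ∈ F_5 does not belong to the subgroup W̄_p · γ_{p+1} F_5. -/
/-- The generators `x_1, …, x_5` of the free group `F_5` (`xF5 i` is `x_{i+1}`). -/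
def xF5 (i : Fin 5) : FreeGroup (Fin 5) := FreeGroup.of i

/-- `Q_i = x_1x_2⁻¹x_3x_4⁻¹x_5x_1⁻¹x_2x_3⁻¹x_4x_5⁻¹ · x_i ·
x_5⁻¹x_4x_3⁻¹x_2x_1⁻¹x_5x_4⁻¹x_3x_2⁻¹x_1 ∈ F_5`. -/
def QF5 (i : Fin 5) : FreeGroup (Fin 5) :=
  xF5 0 * (xF5 1)⁻¹ * xF5 2 * (xF5 3)⁻¹ * xF5 4 *
  (xF5 0)⁻¹ * xF5 1 * (xF5 2)⁻¹ * xF5 3 * (xF5 4)⁻¹ *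
  xF5 i *
  (xF5 4)⁻¹ * xF5 3 * (xF5 2)⁻¹ * xF5 1 * (xF5 0)⁻¹ *
  xF5 4 * (xF5 3)⁻¹ * xF5 2 * (xF5 1)⁻¹ * xF5 0

/-- `r_i = Q_i x_i⁻¹`, the relators of the associated core group of the closure of
the 5-braid `(σ₁σ₂σ₃σ₄)^{10}`. -/
def rF5 (i : Fin 5) : FreeGroup (Fin 5) := QF5 i * (xF5 i)⁻¹

/-!
Map `F_5` to a nilpotent group `Nil3 (ZMod p)` of class 3 and exponent `p` by `x_1, x_5 ↦ 1`
and `x_2, x_3, x_4 ↦ x, y, z`. Every `p`-th power and, as `p ≥ 3`, all of `γ_{p+1} F_5` lie in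
the kernel, while the image of `r_1` has cubic coordinate `2 ≠ 0`.
-/

/-- Coordinates on a nilpotent group of class 3: linear `x, y, z`, quadratic `xz`, `yz` and the
antisymmetric `yx`, and one cubic `c`. As `yx` is antisymmetric, powers carry no `n.choose 3`
terms, so in odd characteristic `n` the exponent is `n`, also for `n = 3` (unlike unitriangular
`4 × 4` matrices). -/
@[ext] structure Nil3 (R : Type*) where
  x : R
  y : R
  z : R
  xz : R
  yz : R
  yx : R
  c : R

namespace Nil3

variable {R : Type*} [CommRing R]

instance : Mul (Nil3 R) where
  mul g h :=
    { x := g.x + h.x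
      y := g.y + h.y
      z := g.z + h.z
      xz := g.xz + h.xz + g.x * h.z
      yz := g.yz + h.yz + g.y * h.z
      yx := g.yx + h.yx + g.y * h.x - g.x * h.y
      c := g.c + h.c + g.y * h.xz - g.x * h.yz + g.yx * h.z }

instance : One (Nil3 R) := ⟨⟨0, 0, 0, 0, 0, 0, 0⟩⟩

instance : Inv (Nil3 R) where
  inv g :=
    { x := -g.x
      y := -g.y
      z := -g.z
      xz := g.x * g.z - g.xz
      yz := g.y * g.z - g.yz
      yx := -g.yx
      c := -g.c + g.y * g.xz - g.x * g.yz + g.yx * g.z }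

@[simp] lemma mul_def (g h : Nil3 R) : g * h =
    ⟨g.x + h.x, g.y + h.y, g.z + h.z, g.xz + h.xz + g.x * h.z, g.yz + h.yz + g.y * h.z,
      g.yx + h.yx + g.y * h.x - g.x * h.y,
      g.c + h.c + g.y * h.xz - g.x * h.yz + g.yx * h.z⟩ := rfl

@[simp] lemma one_def : (1 : Nil3 R) = ⟨0, 0, 0, 0, 0, 0, 0⟩ := rfl

@[simp] lemma inv_def (g : Nil3 R) : g⁻¹ =
    ⟨-g.x, -g.y, -g.z, g.x * g.z - g.xz, g.y * g.z - g.yz, -g.yx,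
      -g.c + g.y * g.xz - g.x * g.yz + g.yx * g.z⟩ := rfl

instance : Group (Nil3 R) where
  mul_assoc _ _ _ := by ext <;> simp only [mul_def] <;> ring
  one_mul _ := by ext <;> simp
  mul_one _ := by ext <;> simp
  inv_mul_cancel _ := by ext <;> simp only [mul_def, inv_def, one_def] <;> ring

lemma pow_eq (g : Nil3 R) (n : ℕ) : g ^ n =
    ⟨n * g.x, n * g.y, n * g.z, n * g.xz + n.choose 2 * (g.x * g.z),
      n * g.yz + n.choose 2 * (g.y * g.z), n * g.yx,
      n * g.c + n.choose 2 * (g.y * g.xz - g.x * g.yz + g.yx * g.z)⟩ := by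
  induction n with
  | zero => ext <;> simp
  | succ n ih =>
    rw [pow_succ, ih, Nat.choose_succ_succ, Nat.choose_one_right]
    ext <;> simp only [mul_def] <;> push_cast <;> ring

lemma pow_eq_one_of_odd {n : ℕ} [CharP R n] (hn : Odd n) (g : Nil3 R) : g ^ n = 1 := by
  have hchoose : (n.choose 2 : R) = 0 := by
    obtain ⟨k, rfl⟩ := hn
    rw [CharP.cast_eq_zero_iff R, Nat.choose_two_right, Nat.add_sub_cancel,
      Nat.mul_div_assoc _ (dvd_mul_right 2 k)]
    exact dvd_mul_right _ _
  ext <;> simp [pow_eq, hchoose]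

def weightTwo : Subgroup (Nil3 R) where
  carrier := {g | g.x = 0 ∧ g.y = 0 ∧ g.z = 0}
  one_mem' := by simp
  mul_mem' := by rintro _ _ ⟨hx, hy, hz⟩ ⟨hx', hy', hz'⟩; simp [*]
  inv_mem' := by rintro _ ⟨hx, hy, hz⟩; simp [*]

def weightThree : Subgroup (Nil3 R) where
  carrier := {g | g.x = 0 ∧ g.y = 0 ∧ g.z = 0 ∧ g.xz = 0 ∧ g.yz = 0 ∧ g.yx = 0}
  one_mem' := by simp
  mul_mem' := by rintro _ _ ⟨h1, h2, h3, h4, h5, h6⟩ ⟨h1', h2', h3', h4', h5', h6'⟩; simp [*]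
  inv_mem' := by rintro _ ⟨h1, h2, h3, h4, h5, h6⟩; simp [*]

open scoped commutatorElement

lemma commutator_mem_weightTwo (g h : Nil3 R) : ⁅g, h⁆ ∈ weightTwo := by
  simp [commutatorElement_def, weightTwo]

lemma commutator_mem_weightThree {g : Nil3 R} (hg : g ∈ weightTwo) (h : Nil3 R) :
    ⁅g, h⁆ ∈ weightThree := by
  obtain ⟨hx, hy, hz⟩ := hg
  simp [commutatorElement_def, weightThree, hx, hy, hz, mul_comm]

lemma commutator_eq_one {g : Nil3 R} (hg : g ∈ weightThree) (h : Nil3 R) : ⁅g, h⁆ = 1 := by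
  obtain ⟨hx, hy, hz, hxz, hyz, hyx⟩ := hg
  ext <;>
    simp only [commutatorElement_def, mul_def, inv_def, one_def, hx, hy, hz, hxz, hyz, hyx] <;>
    ring

lemma lowerCentralSeries_eq_bot {n : ℕ} (hn : 3 ≤ n) :
    (⊤ : Subgroup (Nil3 R)).lowerCentralSeries n = ⊥ := by
  have h1 : (⊤ : Subgroup (Nil3 R)).lowerCentralSeries 1 ≤ weightTwo :=
    Subgroup.commutator_le.mpr fun g _ h _ => commutator_mem_weightTwo g h
  have h2 : (⊤ : Subgroup (Nil3 R)).lowerCentralSeries 2 ≤ weightThree :=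
    Subgroup.commutator_le.mpr fun g hg h _ => commutator_mem_weightThree (h1 hg) h
  have h3 : (⊤ : Subgroup (Nil3 R)).lowerCentralSeries 3 = ⊥ :=
    eq_bot_iff.mpr <| Subgroup.commutator_le.mpr fun g hg h _ =>
      (commutator_eq_one (h2 hg) h).symm ▸ one_mem _
  exact eq_bot_iff.mpr (h3 ▸ Subgroup.lowerCentralSeries_antitone _ hn)

end Nil3

noncomputable def toNil3 (R : Type*) [CommRing R] : FreeGroup (Fin 5) →* Nil3 R :=
  FreeGroup.lift ![1, ⟨1, 0, 0, 0, 0, 0, 0⟩, ⟨0, 1, 0, 0, 0, 0, 0⟩, ⟨0, 0, 1, 0, 0, 0, 0⟩, 1]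

lemma toNil3_rF5_zero_c (R : Type*) [CommRing R] : (toNil3 R (rF5 0)).c = 2 := by
  simp only [rF5, QF5, xF5, toNil3, map_mul, map_inv, FreeGroup.lift_apply_of, Matrix.cons_val]
  norm_num

theorem WbarGamma_le_ker {m n q : ℕ} {G : Type*} [Group G] (f : FreeGroup (Fin m) →* G)
    (hexp : ∀ g : G, g ^ n = 1) (hnil : (⊤ : Subgroup G).lowerCentralSeries (q - 1) = ⊥) :
    WbarGamma m n q ≤ f.ker := by
  refine sup_le (Subgroup.normalClosure_le_normal ?_) fun w hw => ?_
  · rintro _ ⟨w, rfl⟩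
    simp [hexp]
  · have hmap : f w ∈ ((⊤ : Subgroup (FreeGroup (Fin m))).lowerCentralSeries (q - 1)).map f :=
      Subgroup.mem_map_of_mem f hw
    rw [Subgroup.map_lowerCentralSeries] at hmap
    simpa [hnil] using Subgroup.lowerCentralSeries_mono (q - 1) le_top hmap

/-- For every odd prime `p`, the element `r_1 ∈ F_5` does not belong to
the subgroup `W̄_p · γ_{p+1} F_5`. -/
theorem rF5_not_mem_WbarGamma (p : ℕ) (hp : p.Prime) (hodd : Odd p) :
    rF5 0 ∉ WbarGamma 5 p (p + 1) := by
  have hp3 : 3 ≤ p := hp.two_le.lt_of_ne (by rintro rfl; exact (by decide : ¬ Odd 2) hodd)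
  intro hr
  have hker := WbarGamma_le_ker (toNil3 (ZMod p)) (Nil3.pow_eq_one_of_odd hodd)
    (Nil3.lowerCentralSeries_eq_bot (by omega)) hr
  have htwo : ((2 : ℕ) : ZMod p) = 0 := by
    simpa [toNil3_rF5_zero_c] using congrArg Nil3.c (MonoidHom.mem_ker.mp hker)
  exact absurd (Nat.le_of_dvd two_pos ((ZMod.natCast_eq_zero_iff 2 p).mp htwo)) (by omega)
end

section
/- Let p be an odd prime. In the truncated algebra A_4 over ℤ/pℤ on X_1, …, X_4, the degree-3 component of E^p(r_b) has coefficient 1 on the monomial X_4X_2X_3 and coefficient 0 on the monomial X_4X_3X_2. -/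
/-- The generators `x_1, …, x_4` of the free group `F_4` (`xF4 i` is `x_{i+1}`). -/
def xF4 (i : Fin 4) : FreeGroup (Fin 4) := FreeGroup.of i

/-- `Q_3 = x_4x_1⁻¹x_2x_4⁻¹x_1x_2⁻¹ · x_3 · x_2⁻¹x_1x_4⁻¹x_2x_1⁻¹x_4 ∈ F_4`. -/
def QWelded : FreeGroup (Fin 4) :=
  xF4 3 * (xF4 0)⁻¹ * xF4 1 * (xF4 3)⁻¹ * xF4 0 * (xF4 1)⁻¹ *
  xF4 2 *
  (xF4 1)⁻¹ * xF4 0 * (xF4 3)⁻¹ * xF4 1 * (xF4 0)⁻¹ * xF4 3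

/-- `r_b = Q_3 x_3⁻¹ ∈ F_4`, the relator of the associated core group of the closure
of the welded 4-braid `b`. -/
def rWelded : FreeGroup (Fin 4) := QWelded * (xF4 2)⁻¹

/-! Fix a word `w = w₀ ⋯ w_{n-1}` and send `X_x` to the adjacency matrix of the `x`-labelled
edges of the path `0 → 1 → ⋯ → n` whose `j`-th edge is labelled `w_j`. A monomial `u` then goes
to the matrix whose `(i, j)` entry is `1` exactly when `u` labels the subpath from `i` to `j`.
Hence the `(0, n)` entry of the image of `t` is the coefficient of `w` in `t`, and monomials of
degree `> n` are killed, so the representation factors through `A_k` for `n < k`. When the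
letters of `w` are distinct, the image of `X_x` squares to zero, so `1 + X_x` goes to a
unipotent matrix with inverse `1 - X_x`. For the two words in question the coefficient is thus
a corner entry of a product of fourteen explicit unitriangular `4 × 4` matrices. -/

def pathMatrix (R : Type*) [Zero R] [One R] {X : Type*} [DecidableEq X] (w : List X) (x : X) :
    Matrix (Fin (w.length + 1)) (Fin (w.length + 1)) R :=
  Matrix.of fun i j => if (j : ℕ) = i + 1 ∧ w[(i : ℕ)]? = some x then 1 else 0

section PathMatrix

variable {R : Type*} [Semiring R] {X : Type*} [DecidableEq X]

theorem prod_map_pathMatrix_apply (w u : List X) (i j : Fin (w.length + 1)) :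
    (u.map (pathMatrix R w)).prod i j =
      if (j : ℕ) = i + u.length ∧ u <+: w.drop i then 1 else 0 := by
  induction u generalizing i with
  | nil => simp [Matrix.one_apply, Fin.ext_iff, eq_comm]
  | cons a u ih =>
    rw [List.map_cons, List.prod_cons, Matrix.mul_apply]
    rcases lt_or_ge (i : ℕ) w.length with hi | hi
    · rw [Fintype.sum_eq_single ⟨i + 1, by omega⟩ fun k hk => by
        rw [pathMatrix, Matrix.of_apply, if_neg fun h => hk (Fin.ext h.1), zero_mul]]
      simp only [pathMatrix, Matrix.of_apply, ih, List.drop_eq_getElem_cons hi,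
        List.cons_prefix_cons, List.getElem?_eq_getElem hi, Option.some.injEq, List.length_cons]
      by_cases ha : w[(i : ℕ)] = a
      · simp [ha, Nat.add_assoc, Nat.add_comm 1]
      · simp [ha, Ne.symm ha]
    · simp [pathMatrix, List.getElem?_eq_none hi, List.drop_eq_nil_of_le hi]

theorem prod_map_pathMatrix_eq_zero_of_length_lt {w u : List X} (h : w.length < u.length) :
    (u.map (pathMatrix R w)).prod = 0 := by
  ext i j
  rw [prod_map_pathMatrix_apply, if_neg, Matrix.zero_apply]
  rintro ⟨-, hu⟩
  have := hu.length_le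
  rw [List.length_drop] at this
  omega

theorem pathMatrix_mul_self_eq_zero {w : List X} (hw : w.Nodup) (x : X) :
    pathMatrix R w x * pathMatrix R w x = 0 := by
  ext i j
  have hprod := prod_map_pathMatrix_apply (R := R) w [x, x] i j
  simp only [List.map_cons, List.map_nil, List.prod_cons, List.prod_nil, mul_one] at hprod
  rw [hprod, if_neg, Matrix.zero_apply]
  rintro ⟨-, hu⟩
  simpa using (hw.sublist (List.drop_sublist _ _)).sublist hu.sublist

end PathMatrix

section PathRep

variable {R : Type*} [CommSemiring R] {X : Type*} [DecidableEq X]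

variable (R) in
noncomputable def pathRep (w : List X) :
    FreeAlgebra R X →ₐ[R] Matrix (Fin (w.length + 1)) (Fin (w.length + 1)) R :=
  FreeAlgebra.lift R (pathMatrix R w)

theorem pathRep_list_prod (w u : List X) :
    pathRep R w (u.map (FreeAlgebra.ι R)).prod = (u.map (pathMatrix R w)).prod := by
  simp [pathRep, map_list_prod, List.map_map, Function.comp_def]

theorem coeff_equivMonoidAlgebraFreeMonoid_eq_pathRep (w : List X) (t : FreeAlgebra R X) :
    (FreeAlgebra.equivMonoidAlgebraFreeMonoid t).coeff (FreeMonoid.ofList w) =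
      pathRep R w t 0 (Fin.last _) := by
  obtain ⟨f, rfl⟩ := FreeAlgebra.equivMonoidAlgebraFreeMonoid.symm.surjective t
  rw [AlgEquiv.apply_symm_apply]
  induction f using MonoidAlgebra.induction_linear with
  | zero => simp
  | add f g hf hg => simp [MonoidAlgebra.coeff_add, hf, hg]
  | single a r =>
    classical
    have hsymm : FreeAlgebra.equivMonoidAlgebraFreeMonoid.symm (MonoidAlgebra.single a r) =
        r • (a.toList.map (FreeAlgebra.ι R)).prod :=
      (MonoidAlgebra.lift_single _ _ _).trans (by rw [FreeMonoid.lift_apply])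
    have hcond : ((Fin.last w.length : ℕ) = (0 : Fin (w.length + 1)) + a.toList.length ∧
        a.toList <+: w.drop (0 : Fin (w.length + 1))) ↔ a = FreeMonoid.ofList w := by
      rw [← FreeMonoid.toList.injective.eq_iff, FreeMonoid.toList_ofList]
      simp only [Fin.val_last, Fin.val_zero, zero_add, List.drop_zero]
      exact ⟨fun h => h.2.eq_of_length h.1.symm, fun h => ⟨by rw [h], h ▸ List.prefix_refl _⟩⟩
    rw [hsymm, map_smul, Matrix.smul_apply, pathRep_list_prod, prod_map_pathMatrix_apply,
      MonoidAlgebra.coeff_single, Finsupp.single_apply, if_congr hcond rfl rfl, smul_eq_mul,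
      mul_ite, mul_one, mul_zero]

end PathRep

section PathUnitRep

variable {R : Type*} [Ring R] {X : Type*} [DecidableEq X] {w : List X}

def pathUnit (hw : w.Nodup) (x : X) : (Matrix (Fin (w.length + 1)) (Fin (w.length + 1)) R)ˣ where
  val := 1 + pathMatrix R w x
  inv := 1 - pathMatrix R w x
  val_inv := by rw [mul_sub, mul_one, add_mul, one_mul, pathMatrix_mul_self_eq_zero hw]; abel
  inv_val := by rw [sub_mul, one_mul, mul_add, mul_one, pathMatrix_mul_self_eq_zero hw]; abel

theorem val_pathUnit (hw : w.Nodup) (x : X) :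
    ((pathUnit hw x : (Matrix _ _ R)ˣ) : Matrix _ _ R) = 1 + pathMatrix R w x := rfl

theorem val_inv_pathUnit (hw : w.Nodup) (x : X) :
    ((pathUnit hw x)⁻¹ : (Matrix _ _ R)ˣ) = 1 - pathMatrix R w x := rfl

def pathUnitRep (hw : w.Nodup) :
    FreeGroup X →* (Matrix (Fin (w.length + 1)) (Fin (w.length + 1)) R)ˣ :=
  FreeGroup.lift (pathUnit hw)

end PathUnitRep

section Truncation

variable {p m k : ℕ} {w : List (Fin m)}

noncomputable def truncPathRep (hk : w.length < k) :
    TruncAlgebra p m k →+* Matrix (Fin (w.length + 1)) (Fin (w.length + 1)) (ZMod p) :=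
  RingQuot.lift ⟨(pathRep (ZMod p) w).toRingHom, by
    rintro _ _ ⟨u, rfl, rfl, rfl⟩
    simpa [magnusMonomial, pathRep_list_prod] using prod_map_pathMatrix_eq_zero_of_length_lt hk⟩

theorem truncPathRep_truncMk (hk : w.length < k) (t : FreeAlgebra (ZMod p) (Fin m)) :
    truncPathRep hk (truncMk p m k t) = pathRep (ZMod p) w t :=
  RingQuot.lift_mkRingHom_apply _ _ t

theorem units_map_truncPathRep_comp_magnus (hw : w.Nodup) (hk : w.length < k) :
    (Units.map (truncPathRep (p := p) hk).toMonoidHom).comp (magnus p m k) = pathUnitRep hw := by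
  refine FreeGroup.ext_hom _ _ fun x => Units.ext ?_
  simp [magnus, pathUnitRep, truncPathRep_truncMk, pathRep, val_pathUnit]

theorem magnusCoeff_eq_pathUnitRep (hw : w.Nodup) (hk : w.length < k) {g : FreeGroup (Fin m)}
    {t : FreeAlgebra (ZMod p) (Fin m)} (ht : truncMk p m k t = magnus p m k g) :
    magnusCoeff p m w t = (pathUnitRep (R := ZMod p) hw g).val 0 (Fin.last _) := by
  rw [magnusCoeff, coeff_equivMonoidAlgebraFreeMonoid_eq_pathRep, ← truncPathRep_truncMk hk, ht,
    ← units_map_truncPathRep_comp_magnus hw hk]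
  rfl

end Truncation

section Triple

variable {X : Type*} [DecidableEq X] (a b c x : X)

theorem one_add_pathMatrix_triple {R : Type*} [Semiring R] :
    (1 + pathMatrix R [a, b, c] x :
        Matrix (Fin ([a, b, c].length + 1)) (Fin ([a, b, c].length + 1)) R) =
      !![1, if a = x then 1 else 0, 0, 0;
         0, 1, if b = x then 1 else 0, 0;
         0, 0, 1, if c = x then 1 else 0;
         0, 0, 0, 1] := by
  ext i j
  fin_cases i <;> fin_cases j <;> simp [pathMatrix]

theorem one_sub_pathMatrix_triple {R : Type*} [Ring R] :
    (1 - pathMatrix R [a, b, c] x :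
        Matrix (Fin ([a, b, c].length + 1)) (Fin ([a, b, c].length + 1)) R) =
      !![1, -if a = x then 1 else 0, 0, 0;
         0, 1, -if b = x then 1 else 0, 0;
         0, 0, 1, -if c = x then 1 else 0;
         0, 0, 0, 1] := by
  ext i j
  fin_cases i <;> fin_cases j <;> simp [pathMatrix]

end Triple

theorem magnus_rWelded_coeff_general (p : ℕ) :
    ∀ t : FreeAlgebra (ZMod p) (Fin 4),
      truncMk p 4 4 t = ↑(magnus p 4 4 rWelded) →
        magnusCoeff p 4 [3, 1, 2] t = 1 ∧ magnusCoeff p 4 [3, 2, 1] t = 0 := by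
  intro t ht
  rw [magnusCoeff_eq_pathUnitRep (w := [3, 1, 2]) (by decide) (by decide) ht,
    magnusCoeff_eq_pathUnitRep (w := [3, 2, 1]) (by decide) (by decide) ht]
  simp only [rWelded, QWelded, xF4, map_mul, map_inv, pathUnitRep, FreeGroup.lift_apply_of,
    Units.val_mul, val_pathUnit, val_inv_pathUnit, one_add_pathMatrix_triple,
    one_sub_pathMatrix_triple]
  simp

/-- For an odd prime `p`, in `A_4` over `ℤ/pℤ` on `X_1, …, X_4` the
degree-3 component of `E^p(r_b)` has coefficient `1` on `X_4X_2X_3` and coefficient `0`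
on `X_4X_3X_2`.  (The coefficient of a monomial in an element of `A_4` is computed via
any representative in the free algebra `T`.) -/
theorem magnus_rWelded_coeff (p : ℕ) (hp : p.Prime) (hodd : Odd p) :
    ∀ t : FreeAlgebra (ZMod p) (Fin 4),
      truncMk p 4 4 t = ↑(magnus p 4 4 rWelded) →
        magnusCoeff p 4 [3, 1, 2] t = 1 ∧ magnusCoeff p 4 [3, 2, 1] t = 0 :=
  magnus_rWelded_coeff_general p
end

section
/- Let p be an odd prime and let G be the group presented as F_5 modulo the normal closure of {r_1, r_2, r_3, r_4, r_5} ∪ W_p (i.e., G = ⟨x_1, …, x_5 | r_1, …, r_5, W_p⟩). Then for every integer q ≥ p+1, the quotient G/γ_q G is not isomorphic to F^q(5,p). -/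
/-- `G = ⟨x_1, …, x_5 | r_1, …, r_5, W_p⟩`, the quotient of `F_5` by the normal closure
of `{r_1, …, r_5} ∪ W_p`. -/
def GBraid (p : ℕ) : Type :=
  FreeGroup (Fin 5) ⧸
    Subgroup.normalClosure (Set.range rF5 ∪ powSet (FreeGroup (Fin 5)) p)

noncomputable instance (p : ℕ) : Group (GBraid p) := QuotientGroup.Quotient.group _

/-!
Suppose `G/γ_q G ≅ F^q(5,p)`. Every map of the generators into a finite group `H` of exponent `p`
with `γ_4 H = 1` extends to `F^q(5,p) → H`, since `q ≥ 4`; so there are `|H|^5` homomorphisms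
`G/γ_q G → H`. They are determined by the images of the generators, of which there are `|H|^5`
choices, hence every choice extends, and in particular kills `r_1`. This is contradicted by the
model of the free Burnside group `B(3,3)` for `p = 3`, and by the unitriangular group `UT₄(𝔽_p)`
for `p ≥ 5`: in both, a suitable choice of images sends `r_1` to a nontrivial central element.
-/

open scoped commutatorElement

namespace FreeGroup

theorem exists_comp_eq_lift_of_mulEquiv_quotient {α A H : Type*} [Finite α] [Group A]
    [Group H] [Finite H] {M : Subgroup (FreeGroup α)} [M.Normal]
    (hM : ∀ f : α → H, M ≤ (lift f).ker) {π : FreeGroup α →* A} (hπ : Function.Surjective π)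
    (e : A ≃* FreeGroup α ⧸ M) (f : α → H) : ∃ φ : A →* H, φ.comp π = lift f := by
  let extend : (α → H) → (A →* H) := fun f' =>
    (QuotientGroup.lift M (lift f') (hM f')).comp e.toMonoidHom
  let restrict : (A →* H) → (α → H) := fun φ i => φ (π (of i))
  have extend_injective : Function.Injective extend := fun f₁ f₂ h => funext fun i => by
    simpa [extend] using DFunLike.congr_fun h (e.symm (QuotientGroup.mk (of i)))
  have restrict_injective : Function.Injective restrict := fun φ₁ φ₂ h =>
    (MonoidHom.cancel_right hπ).mp (ext_hom _ _ (congrFun h))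
  obtain ⟨f', hf'⟩ := Finite.surjective_of_injective (restrict_injective.comp extend_injective) f
  exact ⟨extend f', ext_hom _ _ fun i => by simpa using congrFun hf' i⟩

end FreeGroup

namespace Subgroup

theorem lowerCentralSeries_le_ker {G H : Type*} [Group G] [Group H] (f : G →* H) {k n : ℕ}
    (hH : (⊤ : Subgroup H).lowerCentralSeries k = ⊥) (hkn : k ≤ n) :
    (⊤ : Subgroup G).lowerCentralSeries n ≤ f.ker := by
  intro x hx
  have hfx : f x ∈ ((⊤ : Subgroup G).map f).lowerCentralSeries n := by
    rw [← map_lowerCentralSeries]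
    exact mem_map_of_mem f hx
  simpa [hH] using lowerCentralSeries_antitone ⊤ hkn (lowerCentralSeries_mono n le_top hfx)

theorem lowerCentralSeries_three_eq_bot {G A : Type*} [Group G] [CommGroup A] (π : G →* A)
    (hπ : ∀ g ∈ π.ker, ∀ h : G, ⁅g, h⁆ ∈ center G) :
    (⊤ : Subgroup G).lowerCentralSeries 3 = ⊥ :=
  lowerCentralSeries_succ_eq_bot _ <| commutator_le.mpr fun g hg h _ =>
    hπ g (Abelianization.commutator_subset_ker π hg) h

end Subgroup

theorem WbarGamma_le_ker_lift {m n q k : ℕ} {H : Type*} [Group H] (hexp : ∀ x : H, x ^ n = 1)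
    (hH : (⊤ : Subgroup H).lowerCentralSeries k = ⊥) (hkq : k ≤ q - 1) (f : Fin m → H) :
    WbarGamma m n q ≤ (FreeGroup.lift f).ker := by
  refine sup_le (Subgroup.normalClosure_le_normal ?_) (Subgroup.lowerCentralSeries_le_ker _ hH hkq)
  rintro _ ⟨w, rfl⟩
  simp [hexp]

namespace GBraid

def mk (p : ℕ) : FreeGroup (Fin 5) →* GBraid p := QuotientGroup.mk' _

theorem mk_surjective (p : ℕ) : Function.Surjective (mk p) := QuotientGroup.mk'_surjective _

theorem mk_rF5 (p : ℕ) (i : Fin 5) : mk p (rF5 i) = 1 :=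
  (QuotientGroup.eq_one_iff _).mpr (Subgroup.subset_normalClosure (Or.inl ⟨i, rfl⟩))

end GBraid

/-- A model of the free Burnside group `B(3,3)`, of order `3⁷`: the coordinates are the exponents
in the collected form `a^{a1} b^{a2} c^{a3} [b,a]^{b1} [c,a]^{b2} [c,b]^{b3} u^c`, with `u` central. -/
@[ext] structure B33 : Type where
  a1 : ZMod 3
  a2 : ZMod 3
  a3 : ZMod 3
  b1 : ZMod 3
  b2 : ZMod 3
  b3 : ZMod 3
  c : ZMod 3
  deriving DecidableEq

namespace B33

instance : Finite B33 :=
  Finite.of_injective (fun g => (g.a1, g.a2, g.a3, g.b1, g.b2, g.b3, g.c)) fun g h hgh => by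
    cases g; cases h; simp_all

instance : Mul B33 :=
  ⟨fun g h => ⟨g.a1 + h.a1, g.a2 + h.a2, g.a3 + h.a3,
    g.a2 * h.a1 + g.b1 + h.b1, g.a3 * h.a1 + g.b2 + h.b2, g.a3 * h.a2 + g.b3 + h.b3,
    -(g.a2 * g.a3 * h.a1) - g.a2 * h.a1 * h.a3 + g.a3 * h.a1 * h.a2
      - g.b1 * h.a3 + g.b2 * h.a2 - g.b3 * h.a1 + g.c + h.c⟩⟩

instance : One B33 := ⟨⟨0, 0, 0, 0, 0, 0, 0⟩⟩

instance : Inv B33 :=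
  ⟨fun g => ⟨-g.a1, -g.a2, -g.a3, g.a1 * g.a2 - g.b1, g.a1 * g.a3 - g.b2, g.a2 * g.a3 - g.b3,
    2 * (g.a1 * g.a2 * g.a3) - g.a1 * g.b3 + g.a2 * g.b2 - g.a3 * g.b1 - g.c⟩⟩

@[simp] lemma mul_a1 (g h : B33) : (g * h).a1 = g.a1 + h.a1 := rfl
@[simp] lemma mul_a2 (g h : B33) : (g * h).a2 = g.a2 + h.a2 := rfl
@[simp] lemma mul_a3 (g h : B33) : (g * h).a3 = g.a3 + h.a3 := rfl
@[simp] lemma mul_b1 (g h : B33) : (g * h).b1 = g.a2 * h.a1 + g.b1 + h.b1 := rfl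
@[simp] lemma mul_b2 (g h : B33) : (g * h).b2 = g.a3 * h.a1 + g.b2 + h.b2 := rfl
@[simp] lemma mul_b3 (g h : B33) : (g * h).b3 = g.a3 * h.a2 + g.b3 + h.b3 := rfl
@[simp] lemma mul_c (g h : B33) : (g * h).c =
    -(g.a2 * g.a3 * h.a1) - g.a2 * h.a1 * h.a3 + g.a3 * h.a1 * h.a2
      - g.b1 * h.a3 + g.b2 * h.a2 - g.b3 * h.a1 + g.c + h.c := rfl
@[simp] lemma one_a1 : (1 : B33).a1 = 0 := rfl
@[simp] lemma one_a2 : (1 : B33).a2 = 0 := rfl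
@[simp] lemma one_a3 : (1 : B33).a3 = 0 := rfl
@[simp] lemma one_b1 : (1 : B33).b1 = 0 := rfl
@[simp] lemma one_b2 : (1 : B33).b2 = 0 := rfl
@[simp] lemma one_b3 : (1 : B33).b3 = 0 := rfl
@[simp] lemma one_c : (1 : B33).c = 0 := rfl
@[simp] lemma inv_a1 (g : B33) : g⁻¹.a1 = -g.a1 := rfl
@[simp] lemma inv_a2 (g : B33) : g⁻¹.a2 = -g.a2 := rfl
@[simp] lemma inv_a3 (g : B33) : g⁻¹.a3 = -g.a3 := rfl
@[simp] lemma inv_b1 (g : B33) : g⁻¹.b1 = g.a1 * g.a2 - g.b1 := rfl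
@[simp] lemma inv_b2 (g : B33) : g⁻¹.b2 = g.a1 * g.a3 - g.b2 := rfl
@[simp] lemma inv_b3 (g : B33) : g⁻¹.b3 = g.a2 * g.a3 - g.b3 := rfl
@[simp] lemma inv_c (g : B33) : g⁻¹.c =
    2 * (g.a1 * g.a2 * g.a3) - g.a1 * g.b3 + g.a2 * g.b2 - g.a3 * g.b1 - g.c := rfl

-- Associativity and `x ^ 3 = 1` hold only modulo 3, hence `reduce_mod_char`.
instance : Group B33 :=
  Group.ofLeftAxioms
    (fun x y z => by ext <;> simp <;> rw [← sub_eq_zero] <;> ring_nf; reduce_mod_char)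
    (fun x => by ext <;> simp)
    (fun x => by ext <;> simp <;> ring)

theorem pow_three_eq_one (x : B33) : x ^ 3 = 1 := by
  rw [pow_succ, pow_two]
  ext <;> simp <;> rw [← sub_eq_zero] <;> ring_nf <;> reduce_mod_char

theorem lowerCentralSeries_three : (⊤ : Subgroup B33).lowerCentralSeries 3 = ⊥ := by
  refine Subgroup.lowerCentralSeries_three_eq_bot
    (MonoidHom.mk' (fun g : B33 => Multiplicative.ofAdd (g.a1, g.a2, g.a3)) fun _ _ => rfl) ?_
  intro g hg h
  simp only [MonoidHom.mem_ker, MonoidHom.mk'_apply, ofAdd_eq_one, Prod.mk_eq_zero] at hg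
  obtain ⟨h1, h2, h3⟩ := hg
  refine Subgroup.mem_center_iff.mpr fun z => ?_
  ext <;> simp [commutatorElement_def, h1, h2, h3] <;> ring

theorem exists_lift_rF5_ne_one : ∃ f : Fin 5 → B33, FreeGroup.lift f (rF5 0) ≠ 1 := by
  refine ⟨![1, 1, ⟨1, 0, 0, 0, 0, 0, 0⟩, ⟨0, 1, 0, 0, 0, 0, 0⟩, ⟨0, 0, 1, 0, 0, 0, 0⟩], ?_⟩
  simp only [rF5, QF5, xF5, map_mul, map_inv, FreeGroup.lift_apply_of]
  decide

end B33

/-- The group of upper unitriangular `4 × 4` matrices over `R`, by their entries above the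
diagonal. -/
@[ext] structure UT4 (R : Type) [CommRing R] : Type where
  a12 : R
  a13 : R
  a14 : R
  a23 : R
  a24 : R
  a34 : R

namespace UT4

variable {R : Type} [CommRing R]

instance [Finite R] : Finite (UT4 R) :=
  Finite.of_injective (fun g => (g.a12, g.a13, g.a14, g.a23, g.a24, g.a34)) fun g h hgh => by
    cases g; cases h; simp_all

instance : Mul (UT4 R) :=
  ⟨fun g h => ⟨g.a12 + h.a12, g.a13 + h.a13 + g.a12 * h.a23,
    g.a14 + h.a14 + g.a12 * h.a24 + g.a13 * h.a34,
    g.a23 + h.a23, g.a24 + h.a24 + g.a23 * h.a34, g.a34 + h.a34⟩⟩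

instance : One (UT4 R) := ⟨⟨0, 0, 0, 0, 0, 0⟩⟩

instance : Inv (UT4 R) :=
  ⟨fun g => ⟨-g.a12, -g.a13 + g.a12 * g.a23,
    -g.a14 + g.a12 * g.a24 + g.a13 * g.a34 - g.a12 * g.a23 * g.a34,
    -g.a23, -g.a24 + g.a23 * g.a34, -g.a34⟩⟩

@[simp] lemma mul_a12 (g h : UT4 R) : (g * h).a12 = g.a12 + h.a12 := rfl
@[simp] lemma mul_a13 (g h : UT4 R) : (g * h).a13 = g.a13 + h.a13 + g.a12 * h.a23 := rfl
@[simp] lemma mul_a14 (g h : UT4 R) :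
    (g * h).a14 = g.a14 + h.a14 + g.a12 * h.a24 + g.a13 * h.a34 := rfl
@[simp] lemma mul_a23 (g h : UT4 R) : (g * h).a23 = g.a23 + h.a23 := rfl
@[simp] lemma mul_a24 (g h : UT4 R) : (g * h).a24 = g.a24 + h.a24 + g.a23 * h.a34 := rfl
@[simp] lemma mul_a34 (g h : UT4 R) : (g * h).a34 = g.a34 + h.a34 := rfl
@[simp] lemma one_a12 : (1 : UT4 R).a12 = 0 := rfl
@[simp] lemma one_a13 : (1 : UT4 R).a13 = 0 := rfl
@[simp] lemma one_a14 : (1 : UT4 R).a14 = 0 := rfl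
@[simp] lemma one_a23 : (1 : UT4 R).a23 = 0 := rfl
@[simp] lemma one_a24 : (1 : UT4 R).a24 = 0 := rfl
@[simp] lemma one_a34 : (1 : UT4 R).a34 = 0 := rfl
@[simp] lemma inv_a12 (g : UT4 R) : g⁻¹.a12 = -g.a12 := rfl
@[simp] lemma inv_a13 (g : UT4 R) : g⁻¹.a13 = -g.a13 + g.a12 * g.a23 := rfl
@[simp] lemma inv_a14 (g : UT4 R) :
    g⁻¹.a14 = -g.a14 + g.a12 * g.a24 + g.a13 * g.a34 - g.a12 * g.a23 * g.a34 := rfl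
@[simp] lemma inv_a23 (g : UT4 R) : g⁻¹.a23 = -g.a23 := rfl
@[simp] lemma inv_a24 (g : UT4 R) : g⁻¹.a24 = -g.a24 + g.a23 * g.a34 := rfl
@[simp] lemma inv_a34 (g : UT4 R) : g⁻¹.a34 = -g.a34 := rfl

instance : Group (UT4 R) :=
  Group.ofLeftAxioms
    (fun x y z => by ext <;> simp <;> ring)
    (fun x => by ext <;> simp)
    (fun x => by ext <;> simp; ring)

theorem pow_eq (g : UT4 R) (n : ℕ) :
    g ^ n = ⟨n • g.a12, n • g.a13 + n.choose 2 • (g.a12 * g.a23),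
      n • g.a14 + n.choose 2 • (g.a12 * g.a24 + g.a13 * g.a34)
        + n.choose 3 • (g.a12 * g.a23 * g.a34),
      n • g.a23, n • g.a24 + n.choose 2 • (g.a23 * g.a34), n • g.a34⟩ := by
  induction n with
  | zero => ext <;> simp
  | succ n ih =>
    rw [pow_succ, ih]
    ext <;> simp only [mul_a12, mul_a13, mul_a14, mul_a23, mul_a24, mul_a34,
      Nat.choose_succ_succ, Nat.choose_one_right, nsmul_eq_mul, Nat.cast_add, Nat.cast_one] <;> ring

theorem pow_eq_one_of_charP {p : ℕ} [CharP R p] (hp : p.Prime) (h3 : 3 < p) (g : UT4 R) :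
    g ^ p = 1 := by
  have hchoose (k : ℕ) (hk₀ : k ≠ 0) (hkp : k < p) : (p.choose k : R) = 0 :=
    (CharP.cast_eq_zero_iff R p _).mpr (hp.dvd_choose_self hk₀ hkp)
  rw [pow_eq]
  ext <;> simp [nsmul_eq_mul, hchoose 2 two_ne_zero (by omega), hchoose 3 three_ne_zero h3]

theorem lowerCentralSeries_three : (⊤ : Subgroup (UT4 R)).lowerCentralSeries 3 = ⊥ := by
  refine Subgroup.lowerCentralSeries_three_eq_bot
    (MonoidHom.mk' (fun g : UT4 R => Multiplicative.ofAdd (g.a12, g.a23, g.a34)) fun _ _ => rfl) ?_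
  intro g hg h
  simp only [MonoidHom.mem_ker, MonoidHom.mk'_apply, ofAdd_eq_one, Prod.mk_eq_zero] at hg
  obtain ⟨h1, h2, h3⟩ := hg
  refine Subgroup.mem_center_iff.mpr fun z => ?_
  ext <;> simp [commutatorElement_def, h1, h2, h3]; ring

theorem exists_lift_rF5_ne_one [Nontrivial R] :
    ∃ f : Fin 5 → UT4 R, FreeGroup.lift f (rF5 0) ≠ 1 := by
  refine ⟨![⟨1, 0, 0, 0, 0, 0⟩, ⟨1, 0, 0, 0, 0, 0⟩, ⟨1, 0, 0, 0, 0, 0⟩,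
    ⟨0, 0, 0, 1, 0, 0⟩, ⟨0, 0, 0, 0, 0, 1⟩], fun h => ?_⟩
  simpa [rF5, QF5, xF5] using congrArg UT4.a14 h

end UT4

theorem exists_finite_group_lift_rF5_ne_one {p : ℕ} (hp : p.Prime) (hodd : Odd p) :
    ∃ (H : Type) (_ : Group H) (_ : Finite H) (f : Fin 5 → H), (∀ x : H, x ^ p = 1) ∧
      (⊤ : Subgroup H).lowerCentralSeries 3 = ⊥ ∧ FreeGroup.lift f (rF5 0) ≠ 1 := by
  obtain rfl | hp5 : p = 3 ∨ 5 ≤ p := by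
    obtain ⟨k, rfl⟩ := hodd
    have := hp.two_le
    omega
  · obtain ⟨f, hf⟩ := B33.exists_lift_rF5_ne_one
    exact ⟨B33, _, inferInstance, f, B33.pow_three_eq_one, B33.lowerCentralSeries_three, hf⟩
  · have : Fact p.Prime := ⟨hp⟩
    obtain ⟨f, hf⟩ := UT4.exists_lift_rF5_ne_one (R := ZMod p)
    exact ⟨UT4 (ZMod p), _, inferInstance, f, UT4.pow_eq_one_of_charP hp (by omega),
      UT4.lowerCentralSeries_three, hf⟩

/-- For every odd prime `p` and every integer `q ≥ p+1`, the quotient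
`G/γ_q G` is not isomorphic to `F^q(5,p)`, where `G = ⟨x_1, …, x_5 | r_1, …, r_5, W_p⟩`. -/
theorem GBraid_quot_not_iso (p : ℕ) (hp : p.Prime) (hodd : Odd p)
    (q : ℕ) (hq : p + 1 ≤ q) :
    ¬ Nonempty ((GBraid p ⧸ (⊤ : Subgroup (GBraid p)).lowerCentralSeries (q - 1)) ≃*
        BurnsideQuot 5 p q) := by
  rintro ⟨e⟩
  obtain ⟨H, _, _, f, hexp, hclass, hf⟩ := exists_finite_group_lift_rF5_ne_one hp hodd
  let π := (QuotientGroup.mk' ((⊤ : Subgroup (GBraid p)).lowerCentralSeries (q - 1))).comp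
    (GBraid.mk p)
  have hπ : Function.Surjective π :=
    (QuotientGroup.mk'_surjective _).comp (GBraid.mk_surjective p)
  have hq3 : 3 ≤ q - 1 := by obtain ⟨k, rfl⟩ := hodd; have := hp.two_le; omega
  obtain ⟨φ, hφ⟩ := FreeGroup.exists_comp_eq_lift_of_mulEquiv_quotient
    (WbarGamma_le_ker_lift hexp hclass hq3) hπ e f
  apply hf
  rw [← hφ, MonoidHom.comp_apply, MonoidHom.comp_apply, GBraid.mk_rF5, map_one, map_one]
end

section
/- Let p be an odd prime and let G be the group presented as F_6 modulo the normal closure of {r_1, …, r_6} ∪ W_p (i.e., G = ⟨x_1, …, x_6 | r_1, …, r_6, W_p⟩). Then for every integer q ≥ p+1, the quotient G/γ_q G is not isomorphic to F^q(6,p). -/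
/-- The generators `x_1, …, x_6` of the free group `F_6` (`xB i` is `x_{i+1}`). -/
def xB (i : Fin 6) : FreeGroup (Fin 6) := FreeGroup.of i

/-- The relators `r_1, …, r_6 ∈ F_6` of the associated core group of the 2-parallel of
the Borromean rings (`rBor i` is `r_{i+1}`). -/
def rBor (i : Fin 6) : FreeGroup (Fin 6) :=
  if i.val ≤ 1 then
    (xB 0 * (xB 1)⁻¹ * xB 4 * (xB 5)⁻¹ * xB 1 * (xB 0)⁻¹ * xB i *
      (xB 0)⁻¹ * xB 1 * (xB 5)⁻¹ * xB 4 * (xB 1)⁻¹ * xB 0)⁻¹ *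
    (xB 0 * (xB 1)⁻¹ * xB 2 * (xB 3)⁻¹ * xB 4 * (xB 5)⁻¹ * xB 3 * (xB 2)⁻¹ * xB 1 * (xB 0)⁻¹ *
      xB i *
      (xB 0)⁻¹ * xB 1 * (xB 2)⁻¹ * xB 3 * (xB 5)⁻¹ * xB 4 * (xB 3)⁻¹ * xB 2 * (xB 1)⁻¹ * xB 0)
  else if i.val ≤ 3 then
    (xB 5 * (xB 4)⁻¹ * xB i * (xB 4)⁻¹ * xB 5)⁻¹ *
    (xB 0 * (xB 1)⁻¹ * xB 5 * (xB 4)⁻¹ * xB 1 * (xB 0)⁻¹ * xB i *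
      (xB 0)⁻¹ * xB 1 * (xB 4)⁻¹ * xB 5 * (xB 1)⁻¹ * xB 0)
  else
    (xB 0 * (xB 1)⁻¹ * xB i * (xB 1)⁻¹ * xB 0)⁻¹ *
    (xB 3 * (xB 2)⁻¹ * xB 0 * (xB 1)⁻¹ * xB 2 * (xB 3)⁻¹ * xB i *
      (xB 3)⁻¹ * xB 2 * (xB 1)⁻¹ * xB 0 * (xB 2)⁻¹ * xB 3)

/-- `G = ⟨x_1, …, x_6 | r_1, …, r_6, W_p⟩`, the quotient of `F_6` by the normal closure
of `{r_1, …, r_6} ∪ W_p`. -/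
def GBor (p : ℕ) : Type :=
  FreeGroup (Fin 6) ⧸
    Subgroup.normalClosure (Set.range rBor ∪ powSet (FreeGroup (Fin 6)) p)

noncomputable instance (p : ℕ) : Group (GBor p) := QuotientGroup.Quotient.group _



/-!
Let `H_n` be the quotient of the group of units `1 + (t)` of the free associative algebra
`(ZMod n)⟨t₀, …, t₅⟩ / (deg ≥ 4)` by the central subgroup `1 + ker λ`, where `λ` is the linear
form `(t₄t₂t₀)^* − (t₀t₄t₂)^*` on the degree-3 part. It is a finite group of class at most 3, and
since `λ` vanishes on cubes `a³` of degree-one elements, it has exponent `n` for odd `n`. Hence the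
Magnus map `x_i ↦ 1 + t_i` factors through `F^q(6,n)` for `q ≥ 4`. It sends `r_1` to the central
element with `λ`-coordinate `2`, so for `n = p ≥ 3` it does not factor through `G/γ_q G`.

Both `G/γ_q G` and `F^q(6,p)` are quotients of `F_6`, the former of the latter, so homomorphisms
to `H_p` out of them are the homomorphisms out of `F_6` killing the respective kernels; the Magnus
map shows that there are strictly fewer of the first kind, so the two groups are not isomorphic.
-/

theorem Subgroup.lowerCentralSeries_le_comap {G K : Type*} [Group G] [Group K] (f : G →* K)
    (n : ℕ) :
    (⊤ : Subgroup G).lowerCentralSeries n ≤ ((⊤ : Subgroup K).lowerCentralSeries n).comap f := by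
  rw [← Subgroup.map_le_iff_le_comap, Subgroup.map_lowerCentralSeries]
  exact Subgroup.lowerCentralSeries_mono n le_top

section HomCounting

variable {F A B H : Type*} [Group F] [Group A] [Group B] [Group H]

instance FreeGroup.finite_monoidHom {α : Type*} [Finite α] [Finite H] :
    Finite (FreeGroup α →* H) :=
  Finite.of_equiv _ FreeGroup.lift

theorem MonoidHom.natCard_monoidHom_of_surjective {π : F →* A} (hπ : Function.Surjective π) :
    Nat.card (A →* H) = {g : F →* H | π.ker ≤ g.ker}.ncard :=
  Nat.card_congr (π.liftOfSurjective hπ).symm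

theorem not_nonempty_mulEquiv_of_ker_lt [Finite (F →* H)] {πA : F →* A} {πB : F →* B}
    (hA : Function.Surjective πA) (hB : Function.Surjective πB) (hle : πB.ker ≤ πA.ker)
    {φ : F →* H} (hφB : πB.ker ≤ φ.ker) (hφA : ¬ πA.ker ≤ φ.ker) :
    ¬ Nonempty (A ≃* B) := by
  rintro ⟨e⟩
  have hsub : {g : F →* H | πA.ker ≤ g.ker} ⊂ {g | πB.ker ≤ g.ker} :=
    ⟨fun g hg => hle.trans hg, fun h => hφA (h hφB)⟩
  have hcard := Nat.card_congr (e.monoidHomCongrLeftEquiv (N := H))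
  rw [MonoidHom.natCard_monoidHom_of_surjective hA,
    MonoidHom.natCard_monoidHom_of_surjective hB] at hcard
  exact (Set.ncard_lt_ncard hsub).ne hcard

end HomCounting

/-- `⟨a, b, c⟩` is the class of `1 + ∑ aᵢ tᵢ + ∑ bᵢⱼ tᵢtⱼ + d` with `c = λ d`. -/
@[ext] structure TruncMagnus (R : Type*) [CommRing R] where
  a : Fin 6 → R
  b : Fin 6 → Fin 6 → R
  c : R

namespace TruncMagnus

variable {R : Type*} [CommRing R]

/-- The form `λ`, evaluated on `d = ∑ dᵢⱼₖ tᵢtⱼtₖ`. -/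
def cubicForm (d : Fin 6 → Fin 6 → Fin 6 → R) : R := d 4 2 0 - d 0 4 2

instance : One (TruncMagnus R) := ⟨⟨0, 0, 0⟩⟩

instance : Mul (TruncMagnus R) :=
  ⟨fun x y => ⟨x.a + y.a, x.b + y.b + fun i j => x.a i * y.a j,
    x.c + y.c + cubicForm fun i j k => x.a i * y.b j k + x.b i j * y.a k⟩⟩

instance : Inv (TruncMagnus R) :=
  ⟨fun x => ⟨-x.a, -x.b + fun i j => x.a i * x.a j,
    -x.c + cubicForm fun i j k => x.a i * x.b j k + x.b i j * x.a k⟩⟩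

@[simp] lemma one_a : (1 : TruncMagnus R).a = 0 := rfl
@[simp] lemma one_b : (1 : TruncMagnus R).b = 0 := rfl
@[simp] lemma one_c : (1 : TruncMagnus R).c = 0 := rfl
@[simp] lemma mul_a (x y : TruncMagnus R) : (x * y).a = x.a + y.a := rfl
@[simp] lemma mul_b (x y : TruncMagnus R) :
    (x * y).b = x.b + y.b + fun i j => x.a i * y.a j := rfl
@[simp] lemma mul_c (x y : TruncMagnus R) :
    (x * y).c = x.c + y.c + cubicForm fun i j k => x.a i * y.b j k + x.b i j * y.a k := rfl
@[simp] lemma inv_a (x : TruncMagnus R) : x⁻¹.a = -x.a := rfl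
@[simp] lemma inv_b (x : TruncMagnus R) : x⁻¹.b = -x.b + fun i j => x.a i * x.a j := rfl
@[simp] lemma inv_c (x : TruncMagnus R) :
    x⁻¹.c = -x.c + cubicForm fun i j k => x.a i * x.b j k + x.b i j * x.a k := rfl

instance : Group (TruncMagnus R) where
  mul_assoc x y z := by ext <;> simp [cubicForm] <;> ring
  one_mul x := by ext <;> simp [cubicForm]
  mul_one x := by ext <;> simp [cubicForm]
  inv_mul_cancel x := by ext <;> simp [cubicForm]; ring

-- The `n.choose 3` term one expects in the `c`-coordinate is `λ (a ⊗ a ⊗ a) = 0`.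
theorem pow_eq (x : TruncMagnus R) (n : ℕ) :
    x ^ n = ⟨(n : R) • x.a, (n : R) • x.b + (n.choose 2 : R) • fun i j => x.a i * x.a j,
      n * x.c + n.choose 2 * cubicForm fun i j k => x.a i * x.b j k + x.b i j * x.a k⟩ := by
  induction n with
  | zero => ext <;> simp
  | succ n ih =>
    have hchoose : ((n + 1).choose 2 : R) = n.choose 2 + n := by
      rw [Nat.choose_succ_succ, Nat.choose_one_right]; push_cast; ring
    rw [pow_succ, ih]
    ext <;> simp [hchoose, cubicForm] <;> ring

theorem pow_eq_one_of_odd {n : ℕ} (hn : Odd n) (x : TruncMagnus (ZMod n)) : x ^ n = 1 := by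
  have hchoose : ((n.choose 2 : ℕ) : ZMod n) = 0 := by
    obtain ⟨k, rfl⟩ := hn
    rw [ZMod.natCast_eq_zero_iff, Nat.choose_two_right, add_tsub_cancel_right,
      mul_comm 2 k, ← mul_assoc, Nat.mul_div_cancel _ two_pos]
    exact dvd_mul_right _ _
  rw [pow_eq]
  ext <;> simp [hchoose]

def D₂ : Subgroup (TruncMagnus R) where
  carrier := {x | x.a = 0}
  one_mem' := rfl
  mul_mem' {x y} hx hy := by simp_all
  inv_mem' {x} hx := by simp_all

def D₃ : Subgroup (TruncMagnus R) where
  carrier := {x | x.a = 0 ∧ x.b = 0}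
  one_mem' := ⟨rfl, rfl⟩
  mul_mem' {x y} hx hy := by simp_all; rfl
  inv_mem' {x} hx := by simp_all; rfl

theorem lowerCentralSeries_one_le_D₂ :
    (⊤ : Subgroup (TruncMagnus R)).lowerCentralSeries 1 ≤ D₂ := by
  rw [Subgroup.lowerCentralSeries_succ, Subgroup.commutator_def, Subgroup.closure_le]
  rintro _ ⟨g, -, h, -, rfl⟩
  show (g * h * g⁻¹ * h⁻¹).a = 0
  simp

theorem lowerCentralSeries_two_le_D₃ :
    (⊤ : Subgroup (TruncMagnus R)).lowerCentralSeries 2 ≤ D₃ := by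
  rw [Subgroup.lowerCentralSeries_succ, Subgroup.commutator_def, Subgroup.closure_le]
  rintro _ ⟨g, hg, h, -, rfl⟩
  have hga : g.a = 0 := lowerCentralSeries_one_le_D₂ hg
  show (g * h * g⁻¹ * h⁻¹).a = 0 ∧ (g * h * g⁻¹ * h⁻¹).b = 0
  constructor <;> ext <;> simp [hga]

theorem D₃_le_center : (D₃ : Subgroup (TruncMagnus R)) ≤ Subgroup.center _ := by
  rintro x ⟨hxa, hxb⟩
  rw [Subgroup.mem_center_iff]
  intro g
  ext <;> simp [hxa, hxb, cubicForm]; ring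

theorem lowerCentralSeries_three_eq_bot :
    (⊤ : Subgroup (TruncMagnus R)).lowerCentralSeries 3 = ⊥ :=
  Subgroup.lowerCentralSeries_succ_eq_bot _ (lowerCentralSeries_two_le_D₃.trans D₃_le_center)

instance [Finite R] : Finite (TruncMagnus R) :=
  Finite.of_injective (fun x => (x.a, x.b, x.c)) fun x y h => by
    simp only [Prod.mk.injEq] at h
    exact TruncMagnus.ext h.1 h.2.1 h.2.2

instance [DecidableEq R] : DecidableEq (TruncMagnus R) := fun x y =>
  decidable_of_iff (x.a = y.a ∧ x.b = y.b ∧ x.c = y.c) TruncMagnus.ext_iff.symm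

variable {S : Type*} [CommRing S]

def map (f : R →+* S) : TruncMagnus R →* TruncMagnus S where
  toFun x := ⟨f ∘ x.a, fun i j => f (x.b i j), f x.c⟩
  map_one' := by ext <;> simp
  map_mul' x y := by ext <;> simp [cubicForm]

variable (R) in
def gen (i : Fin 6) : TruncMagnus R := ⟨Pi.single i 1, 0, 0⟩

theorem map_comp_lift_gen (f : R →+* S) :
    (map f).comp (FreeGroup.lift (gen R)) = FreeGroup.lift (gen S) :=
  FreeGroup.ext_hom _ _ fun i => by ext <;> simp [map, gen, Pi.single_apply, apply_ite f]

theorem lift_gen_rBor_zero : FreeGroup.lift (gen R) (rBor 0) = ⟨0, 0, 2⟩ := by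
  have hℤ : FreeGroup.lift (gen ℤ) (rBor 0) = ⟨0, 0, 2⟩ := by
    simp only [rBor, Fin.val_zero, zero_le, if_true, xB, map_mul, map_inv,
      FreeGroup.lift_apply_of]
    decide
  rw [← map_comp_lift_gen (Int.castRingHom R), MonoidHom.comp_apply, hℤ]
  ext <;> simp [map]

theorem lift_gen_rBor_zero_ne_one (h2 : (2 : R) ≠ 0) : FreeGroup.lift (gen R) (rBor 0) ≠ 1 :=
  fun h => h2 (by simpa [lift_gen_rBor_zero] using congrArg c h)

end TruncMagnus

theorem WbarGamma_le_ker_lift_gen {n q : ℕ} (hn : Odd n) (hq : 4 ≤ q) :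
    WbarGamma 6 n q ≤ (FreeGroup.lift (TruncMagnus.gen (ZMod n))).ker := by
  refine sup_le (Subgroup.normalClosure_le_normal ?_) ?_
  · rintro _ ⟨w, rfl⟩
    exact MonoidHom.mem_ker.mpr (by rw [map_pow, TruncMagnus.pow_eq_one_of_odd hn])
  · have hγ₃ := Subgroup.lowerCentralSeries_le_comap (FreeGroup.lift (TruncMagnus.gen (ZMod n))) 3
    rw [TruncMagnus.lowerCentralSeries_three_eq_bot, MonoidHom.comap_bot] at hγ₃
    exact (Subgroup.lowerCentralSeries_antitone _ (by omega)).trans hγ₃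

namespace BurnsideQuot

noncomputable def mk (m n q : ℕ) : FreeGroup (Fin m) →* BurnsideQuot m n q := QuotientGroup.mk' _

theorem mk_surjective (m n q : ℕ) : Function.Surjective (mk m n q) :=
  QuotientGroup.mk'_surjective _

theorem ker_mk (m n q : ℕ) : (mk m n q).ker = WbarGamma m n q :=
  QuotientGroup.ker_mk' _

end BurnsideQuot

namespace GBor

noncomputable def mk (p : ℕ) : FreeGroup (Fin 6) →* GBor p := QuotientGroup.mk' _

theorem mk_rBor (p : ℕ) (i : Fin 6) : mk p (rBor i) = 1 :=
  (QuotientGroup.eq_one_iff _).mpr (Subgroup.subset_normalClosure (Or.inl ⟨i, rfl⟩))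

theorem mk_pow (p : ℕ) (w : FreeGroup (Fin 6)) : mk p (w ^ p) = 1 :=
  (QuotientGroup.eq_one_iff _).mpr (Subgroup.subset_normalClosure (Or.inr ⟨w, rfl⟩))

noncomputable def lcsQuotMk (p q : ℕ) :
    FreeGroup (Fin 6) →* GBor p ⧸ (⊤ : Subgroup (GBor p)).lowerCentralSeries (q - 1) :=
  (QuotientGroup.mk' _).comp (mk p)

theorem lcsQuotMk_surjective (p q : ℕ) : Function.Surjective (lcsQuotMk p q) :=
  (QuotientGroup.mk'_surjective _).comp (QuotientGroup.mk'_surjective _)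

theorem WbarGamma_le_ker_lcsQuotMk (p q : ℕ) : WbarGamma 6 p q ≤ (lcsQuotMk p q).ker := by
  refine sup_le (Subgroup.normalClosure_le_normal ?_) ?_
  · rintro _ ⟨w, rfl⟩
    simp [lcsQuotMk, mk_pow]
  · rw [lcsQuotMk, ← MonoidHom.comap_ker, QuotientGroup.ker_mk']
    exact Subgroup.lowerCentralSeries_le_comap _ _

theorem rBor_mem_ker_lcsQuotMk (p q : ℕ) (i : Fin 6) : rBor i ∈ (lcsQuotMk p q).ker := by
  simp [lcsQuotMk, mk_rBor]

end GBor

/-- For every odd prime `p` and every integer `q ≥ p+1`, the quotient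
`G/γ_q G` is not isomorphic to `F^q(6,p)`, where `G = ⟨x_1, …, x_6 | r_1, …, r_6, W_p⟩`. -/
theorem GBor_quot_not_iso (p : ℕ) (hp : p.Prime) (hodd : Odd p)
    (q : ℕ) (hq : p + 1 ≤ q) :
    ¬ Nonempty ((GBor p ⧸ (⊤ : Subgroup (GBor p)).lowerCentralSeries (q - 1)) ≃*
        BurnsideQuot 6 p q) := by
  have hp3 : 3 ≤ p := by
    have := hp.two_le
    have := Nat.odd_iff.mp hodd
    omega
  have : NeZero p := ⟨by omega⟩
  have h2 : ((2 : ℕ) : ZMod p) ≠ 0 := by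
    rw [Ne, ZMod.natCast_eq_zero_iff]
    exact fun h => absurd (Nat.le_of_dvd two_pos h) (by omega)
  exact not_nonempty_mulEquiv_of_ker_lt (GBor.lcsQuotMk_surjective p q)
    (BurnsideQuot.mk_surjective 6 p q)
    ((BurnsideQuot.ker_mk 6 p q).trans_le (GBor.WbarGamma_le_ker_lcsQuotMk p q))
    ((BurnsideQuot.ker_mk 6 p q).trans_le (WbarGamma_le_ker_lift_gen hodd (by omega)))
    fun h => TruncMagnus.lift_gen_rBor_zero_ne_one (by exact_mod_cast h2)
      (h (GBor.rBor_mem_ker_lcsQuotMk p q 0))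
end
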